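/- Let (W,S) be a Coxeter system with S finite. Then every element w of the center Z(W) satisfies w² = 1. -/

import Mathlib

/-!
`W` acts on `W × ZMod 2` by letting `s i` send `(t, e)` to `(s i * t * s i, e + [t = s i])`, as in
the proof of the strong exchange condition. Along a word `ω` the second coordinate counts, mod 2,
the occurrences of `t` in the right inversion sequence of `ω`. The action is faithful: a right
descent `s i` of `w ≠ 1` occurs exactly once in the inversion sequence of a reduced word for `w`,
so it flips the parity. A central element `w` fixes every first coordinate, hence acts by a
translation of the second one, which is an involution; so `w ^ 2` acts trivially and `w ^ 2 = 1`.
-/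

namespace CoxeterSystem

open scoped Classical

variable {B W : Type*} [Group W] {M : CoxeterMatrix B} (cs : CoxeterSystem M W)

local prefix:100 "s" => cs.simple
local prefix:100 "π" => cs.wordProd

lemma simple_conj_eq_simple_iff (i : B) (t : W) : s i * t * s i = s i ↔ t = s i := by
  rw [mul_eq_right, mul_eq_one_iff_eq_inv', cs.inv_simple]

lemma parityPerm_involutive (i : B) :
    Function.Involutive
      fun p : W × ZMod 2 => (s i * p.1 * s i, p.2 + if p.1 = s i then 1 else 0) := by
  rintro ⟨t, e⟩
  ext
  · simp [mul_assoc, cs.simple_mul_simple_self]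
  · simp only [cs.simple_conj_eq_simple_iff, add_assoc, CharTwo.add_self_eq_zero, add_zero]

noncomputable def parityPerm (i : B) : Equiv.Perm (W × ZMod 2) :=
  (cs.parityPerm_involutive i).toPerm

lemma parityPerm_apply (i : B) (t : W) (e : ZMod 2) :
    cs.parityPerm i (t, e) = (s i * t * s i, e + if t = s i then 1 else 0) := rfl

section Dihedral

variable (i j : B)

local notation "r" => s i * s j

lemma simple_mul_pow_eq_inv_pow_mul_simple (n : ℕ) : s j * r ^ n = r⁻¹ ^ n * s j := by
  refine SemiconjBy.pow_right ?_ n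
  rw [SemiconjBy, mul_inv_rev, cs.inv_simple, cs.inv_simple, mul_assoc]

lemma pow_conj_eq_inv_pow_mul_simple_iff (n k : ℕ) (t : W) :
    r ^ n * t * (r ^ n)⁻¹ = r⁻¹ ^ k * s j ↔ t = r⁻¹ ^ (2 * n + k) * s j := by
  have hconj : (r ^ n)⁻¹ * (r⁻¹ ^ k * s j) * r ^ n = r⁻¹ ^ (2 * n + k) * s j := by
    rw [mul_assoc, mul_assoc, cs.simple_mul_pow_eq_inv_pow_mul_simple, ← inv_pow, ← mul_assoc,
      ← mul_assoc, ← pow_add, ← pow_add, two_mul, add_right_comm]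
  rw [← hconj, ← MulAut.conj_apply, ← MulEquiv.eq_symm_apply, MulAut.conj_symm_apply]

lemma simple_conj_eq_simple_iff' (x : W) : s j * x * s j = s i ↔ x = r⁻¹ * s j := by
  nth_rw 2 [← cs.inv_simple j]
  rw [← MulAut.conj_apply, ← MulEquiv.eq_symm_apply, MulAut.conj_symm_apply, mul_inv_rev,
    cs.inv_simple, cs.inv_simple]

/-- The reflections `r⁻¹ ^ n * s j`, `n < 2 * k`, form the right inversion sequence of the
word `i j i j ⋯ i j` of length `2 * k`, read from the right. -/
lemma parityPerm_mul_parityPerm_pow_apply (k : ℕ) (t : W) (e : ZMod 2) :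
    ((cs.parityPerm i * cs.parityPerm j) ^ k) (t, e) =
      (r ^ k * t * (r ^ k)⁻¹,
        e + ∑ n ∈ Finset.range (2 * k), if t = r⁻¹ ^ n * s j then 1 else 0) := by
  induction k with
  | zero => simp
  | succ k ih =>
    rw [pow_succ', Equiv.Perm.mul_apply, ih, Equiv.Perm.mul_apply, parityPerm_apply,
      parityPerm_apply]
    ext
    · simp only [pow_succ', mul_inv_rev, cs.inv_simple]
      group
    · have h₀ := cs.pow_conj_eq_inv_pow_mul_simple_iff i j k 0 t
      have h₁ := cs.pow_conj_eq_inv_pow_mul_simple_iff i j k 1 t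
      rw [pow_zero, one_mul] at h₀
      rw [pow_one] at h₁
      simp only [h₀, cs.simple_conj_eq_simple_iff', h₁, Nat.mul_succ, Finset.sum_range_succ,
        add_zero, add_assoc]

end Dihedral

lemma isLiftable_parityPerm : M.IsLiftable cs.parityPerm := by
  intro i j
  ext ⟨t, e⟩ : 1
  have hperiod : ∀ n, (s i * s j)⁻¹ ^ (M i j + n) = (s i * s j)⁻¹ ^ n := by
    intro n
    rw [pow_add, inv_pow, cs.simple_mul_simple_pow, inv_one, one_mul]
  rw [parityPerm_mul_parityPerm_pow_apply, cs.simple_mul_simple_pow, two_mul,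
    Finset.sum_range_add]
  simp only [hperiod, CharTwo.add_self_eq_zero]
  simp

noncomputable def parityRep : W →* Equiv.Perm (W × ZMod 2) :=
  cs.lift ⟨cs.parityPerm, cs.isLiftable_parityPerm⟩

lemma parityRep_simple (i : B) : cs.parityRep (s i) = cs.parityPerm i :=
  cs.lift_apply_simple cs.isLiftable_parityPerm i

lemma parityRep_wordProd_apply (ω : List B) (t : W) (e : ZMod 2) :
    cs.parityRep (π ω) (t, e) =
      (π ω * t * (π ω)⁻¹, e + ((cs.rightInvSeq ω).count t : ZMod 2)) := by
  induction ω generalizing e with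
  | nil => simp
  | cons i ω ih =>
    have hconj : π ω * t * (π ω)⁻¹ = s i ↔ (π ω)⁻¹ * s i * π ω = t := by
      rw [← MulAut.conj_apply, ← MulEquiv.eq_symm_apply, MulAut.conj_symm_apply, eq_comm]
    rw [cs.wordProd_cons, map_mul, Equiv.Perm.mul_apply, ih, parityRep_simple, parityPerm_apply,
      rightInvSeq, List.count_cons]
    ext
    · simp only [mul_inv_rev, cs.inv_simple]
      group
    · simp only [hconj, beq_iff_eq, Nat.cast_add, Nat.cast_ite, Nat.cast_one, Nat.cast_zero,
        add_assoc]

lemma exists_isReduced_concat_of_isRightDescent {w : W} {i : B} (hi : cs.IsRightDescent w i) :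
    ∃ ω : List B, cs.IsReduced (ω.concat i) ∧ w = π (ω.concat i) := by
  obtain ⟨ω, hω, hw⟩ := cs.exists_isReduced (w * s i)
  have hlen : cs.length (w * s i) + 1 = cs.length w :=
    (cs.length_mul_simple w i).resolve_left (by unfold IsRightDescent at hi; omega)
  have hprod : π (ω.concat i) = w := by
    rw [cs.wordProd_concat, ← hw, cs.simple_mul_simple_cancel_right]
  refine ⟨ω, ?_, hprod.symm⟩
  rw [IsReduced, hprod, List.length_concat, ← hlen, hw, hω.eq]

lemma parityRep_injective : Function.Injective cs.parityRep := by
  rw [injective_iff_map_eq_one]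
  intro w hw
  by_contra hne
  obtain ⟨i, hi⟩ := cs.exists_rightDescent_of_ne_one hne
  obtain ⟨ω, hω, rfl⟩ := cs.exists_isReduced_concat_of_isRightDescent hi
  have hcount : (cs.rightInvSeq (ω.concat i)).count (s i) = 1 := by
    refine List.count_eq_one_of_mem hω.nodup_rightInvSeq ?_
    rw [rightInvSeq_concat]
    simp
  have := congrArg Prod.snd (Equiv.ext_iff.mp hw (s i, 0))
  rw [parityRep_wordProd_apply, hcount] at this
  simp at this

lemma parityRep_sq_of_mem_center {w : W} (hw : w ∈ Subgroup.center W) :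
    cs.parityRep w ^ 2 = 1 := by
  obtain ⟨ω, rfl⟩ := cs.wordProd_surjective w
  ext ⟨t, e⟩ : 1
  have hfix : π ω * t * (π ω)⁻¹ = t := by
    rw [← Subgroup.mem_center_iff.mp hw t, mul_inv_cancel_right]
  rw [sq, Equiv.Perm.mul_apply, cs.parityRep_wordProd_apply ω t, hfix,
    parityRep_wordProd_apply, hfix, add_assoc, CharTwo.add_self_eq_zero, add_zero,
    Equiv.Perm.one_apply]

end CoxeterSystem

theorem sq_eq_one_of_mem_center_of_coxeter_group_general {B : Type*} {W : Type*} [Group W]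
    (M : CoxeterMatrix B) (cs : CoxeterSystem M W) :
    ∀ w ∈ Subgroup.center W, w ^ 2 = 1 := by
  intro w hw
  apply cs.parityRep_injective
  rw [map_pow, map_one, cs.parityRep_sq_of_mem_center hw]

/-- **Theorem (Hosaka).** Let `(W, S)` be a Coxeter system with `S` finite. Then every
element `w` of the center `Z(W)` satisfies `w² = 1`. -/
theorem sq_eq_one_of_mem_center_of_coxeter_group {B : Type*} [Finite B] {W : Type*} [Group W]
    (M : CoxeterMatrix B) (cs : CoxeterSystem M W) :
    ∀ w ∈ Subgroup.center W, w ^ 2 = 1 :=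
  sq_eq_one_of_mem_center_of_coxeter_group_general M cs
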